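/- Let M be a finite poset in which the longest strictly increasing chain has at most D+1 elements, and let ψ : M → {0,1} be any function. Then there exist functions φ_1, …, φ_{D+1} : M → {0,1}, each monotone, such that for all x ∈ M: ψ(x) = φ_1(x) ⊟ (φ_2(x) ⊟ (⋯ ⊟ φ_{D+1}(x))) where a ⊟ b := a ∧ ¬b. -/

import Mathlib

/-- Boolean non-implication: `a ⊟ b = a ∧ ¬b`. -/
def bnimp (a b : Bool) : Bool := a && !b

/-- `nimpChain a [b₁,…,bₘ]` is `a ⊟ (b₁ ⊟ (⋯ ⊟ bₘ))`, associating to the right. -/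
def nimpChain : Bool → List Bool → Bool
  | a, [] => a
  | a, b :: rest => bnimp a (nimpChain b rest)

/-!
Call a chain `c₀ < c₁ < ⋯ < c_{k-1} ≤ x` alternating if `ψ (c j)` is true exactly for even `j`,
and let `g x` be the greatest length of such a chain. The chain condition bounds `g` by `D + 1`,
and `g` is monotone since chains below `x` are chains below any `y ≥ x`. A maximal alternating
chain below `x` cannot be extended by `x` itself, which forces `ψ x` to be the parity of `g x`.
Finally the threshold maps `x ↦ [i < g x]` are monotone, and their nested non-implication
computes exactly that parity.
-/

theorem nimpChain_ofFn_lt (n : ℕ) : ∀ k ≤ n + 1,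
    nimpChain (decide (0 < k)) (List.ofFn fun i : Fin n => decide ((i : ℕ) + 1 < k))
      = decide (Odd k) := by
  induction n with
  | zero => intro k hk; interval_cases k <;> rfl
  | succ n ih =>
    rintro (_ | k) hk
    · simp [nimpChain, bnimp]
    · have head : decide (((0 : Fin (n + 1)) : ℕ) + 1 < k + 1) = decide (0 < k) := by simp
      have tail : (List.ofFn fun i : Fin n => decide ((i.succ : ℕ) + 1 < k + 1))
          = List.ofFn fun i : Fin n => decide ((i : ℕ) + 1 < k) := by simp
      rw [List.ofFn_succ, nimpChain, head, tail, ih k (by omega)]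
      simp [bnimp, Nat.odd_add_one, ← Nat.not_even_iff_odd]

theorem Monotone.decide_lt {α : Type*} [Preorder α] {g : α → ℕ} (hg : Monotone g) (i : ℕ) :
    Monotone fun x => decide (i < g x) :=
  fun _ _ hxy => Bool.le_iff_imp.2 fun hi =>
    decide_eq_true ((of_decide_eq_true hi).trans_le (hg hxy))

section AlternatingChain

variable {M : Type*} [PartialOrder M] (ψ : M → Bool)

def HasAlternatingChainBelow (x : M) (k : ℕ) : Prop :=
  ∃ c : Fin k → M, StrictMono c ∧ (∀ j, c j ≤ x) ∧ ∀ j, ψ (c j) = decide (Even (j : ℕ))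

variable {ψ}

theorem hasAlternatingChainBelow_zero (x : M) : HasAlternatingChainBelow ψ x 0 :=
  ⟨Fin.elim0, fun a => a.elim0, fun a => a.elim0, fun a => a.elim0⟩

theorem HasAlternatingChainBelow.mono {x y : M} {k : ℕ} (hxy : x ≤ y)
    (h : HasAlternatingChainBelow ψ x k) : HasAlternatingChainBelow ψ y k :=
  let ⟨c, hc, hle, hψ⟩ := h
  ⟨c, hc, fun j => (hle j).trans hxy, hψ⟩

theorem HasAlternatingChainBelow.le {D : ℕ} (hM : ¬∃ c : Fin (D + 2) → M, StrictMono c)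
    {x : M} {k : ℕ} (h : HasAlternatingChainBelow ψ x k) : k ≤ D + 1 := by
  obtain ⟨c, hc, -, -⟩ := h
  by_contra! hk
  exact hM ⟨c ∘ Fin.castLE hk, hc.comp (Fin.strictMono_castLE hk)⟩

theorem Fin.strictMono_snoc {α : Type*} [Preorder α] {k : ℕ} {c : Fin k → α} (hc : StrictMono c)
    {x : α} (hx : ∀ j, c j < x) : StrictMono (Fin.snoc c x : Fin (k + 1) → α) := by
  intro a b hab
  induction b using Fin.lastCases with
  | last =>
    obtain ⟨a, rfl⟩ := Fin.exists_castSucc_eq.2 hab.ne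
    simpa using hx a
  | cast b =>
    obtain ⟨a, rfl⟩ := Fin.exists_castSucc_eq.2 (hab.trans (Fin.castSucc_lt_last b)).ne
    simpa using hc (Fin.castSucc_lt_castSucc_iff.1 hab)

theorem HasAlternatingChainBelow.snoc {x : M} {k : ℕ} (h : HasAlternatingChainBelow ψ x k)
    (hx : ψ x = decide (Even k)) : HasAlternatingChainBelow ψ x (k + 1) := by
  obtain ⟨c, hc, hle, hψ⟩ := h
  have hlt : ∀ j, c j < x := by
    intro j
    refine (hle j).lt_of_ne fun hjx => ?_
    obtain ⟨m, rfl⟩ := Nat.exists_eq_add_one_of_ne_zero j.pos.ne'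
    have hlast : c (Fin.last m) = x :=
      (hle _).antisymm (hjx ▸ hc.monotone (Fin.le_last j))
    have := hψ (Fin.last m)
    rw [hlast, hx, decide_eq_decide, Nat.even_add_one] at this
    exact iff_not_self this.symm
  refine ⟨Fin.snoc c x, Fin.strictMono_snoc hc hlt, ?_, ?_⟩
  · intro j
    induction j using Fin.lastCases with
    | last => simp
    | cast j => simpa using (hlt j).le
  · intro j
    induction j using Fin.lastCases with
    | last => simpa using hx
    | cast j => simpa using hψ j

variable (ψ)

open Classical

noncomputable def alternationRank (n : ℕ) (x : M) : ℕ :=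
  Nat.findGreatest (HasAlternatingChainBelow ψ x) n

theorem alternationRank_le (n : ℕ) (x : M) : alternationRank ψ n x ≤ n :=
  Nat.findGreatest_le n

theorem monotone_alternationRank (n : ℕ) : Monotone (alternationRank ψ n) := fun _ _ hxy =>
  Nat.findGreatest_mono_left (fun _ => HasAlternatingChainBelow.mono hxy) n

variable {ψ}

theorem apply_eq_decide_odd_alternationRank {D : ℕ} (hM : ¬∃ c : Fin (D + 2) → M, StrictMono c)
    (x : M) : ψ x = decide (Odd (alternationRank ψ (D + 1) x)) := by
  set k := alternationRank ψ (D + 1) x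
  have hk : HasAlternatingChainBelow ψ x k :=
    Nat.findGreatest_spec (Nat.zero_le _) (hasAlternatingChainBelow_zero x)
  by_contra hne
  have hx : ψ x = decide (Even k) := by
    simpa [← Nat.not_odd_iff_even, Bool.eq_not_iff] using hne
  have hk' := hk.snoc hx
  exact Nat.findGreatest_is_greatest (Nat.lt_succ_self k) (hk'.le hM) hk'

end AlternatingChain

theorem boolean_approximating_form_general (M : Type*) [PartialOrder M] (D : ℕ)
    (hM : ¬∃ c : Fin (D + 2) → M, StrictMono c) (ψ : M → Bool) :
    ∃ φ : Fin (D + 1) → M → Bool,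
      (∀ i, Monotone (φ i)) ∧
      ∀ x, ψ x = nimpChain (φ 0 x) (List.ofFn fun i : Fin D => φ i.succ x) := by
  refine ⟨fun i x => decide ((i : ℕ) < alternationRank ψ (D + 1) x),
    fun i => (monotone_alternationRank ψ _).decide_lt i, fun x => ?_⟩
  rw [apply_eq_decide_odd_alternationRank (ψ := ψ) hM x,
    ← nimpChain_ofFn_lt D _ (alternationRank_le ψ _ x)]
  rfl

/-- Theorem 1 of the paper specialized to `L = {0,1}`: if every strictly
increasing chain in the finite poset `M` has at most `D+1` elements, then every
`ψ : M → {0,1}` decomposes as `φ₁ ⊟ (φ₂ ⊟ (⋯ ⊟ φ_{D+1}))` with all `φᵢ`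
monotone. -/
theorem boolean_approximating_form (M : Type*) [PartialOrder M] [Fintype M] (D : ℕ)
    (hM : ¬∃ c : Fin (D + 2) → M, StrictMono c) (ψ : M → Bool) :
    ∃ φ : Fin (D + 1) → M → Bool,
      (∀ i, Monotone (φ i)) ∧
      ∀ x, ψ x = nimpChain (φ 0 x) (List.ofFn fun i : Fin D => φ i.succ x) :=
  boolean_approximating_form_general M D hM ψ
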